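/- arXiv:2308.12567 — 6 statements merged into one kernel-verified Lean document; each statement's English description precedes it below -/
import Mathlib

section
/- Let a ∈ ℝ, l > 0, and let l₁, l₂, l₃ ≥ 0 with l₁ + l₂ + l₃ = l. Let g : ℝ → ℝ be the step function equal to the constant g_l on [a, a+l₁), equal to the constant g_m on [a+l₁, a+l₁+l₂), and equal to the constant g_r on [a+l₁+l₂, a+l]. Set ḡ = (1/l) ∫_a^{a+l} g(x) dx. Then ∫_a^{a+l} |g(x) − ḡ|² dx = l · [ (l₁/l)(l₃/l)(g_r − g_l)² + (l₂/l)(l₃/l)(g_r − g_m)² + (l₁/l)(l₂/l)(g_m − g_l)² ]. -/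
open MeasureTheory intervalIntegral

lemma piece_const (f : ℝ → ℝ) (p q c : ℝ) (hpq : p ≤ q)
    (h : ∀ x ∈ Set.Ico p q, f x = c) :
    IntervalIntegrable f volume p q ∧ (∫ x in p..q, f x) = (q - p) * c := by
  have hq : (volume : Measure ℝ) {q} = 0 := measure_singleton q
  have hne : ∀ᵐ x ∂(volume : Measure ℝ), x ≠ q := by
    rw [ae_iff]
    simpa using hq
  have h0 : f =ᵐ[volume.restrict (Set.Ioc p q)] fun _ => c := by
    rw [Filter.EventuallyEq, ae_restrict_iff' measurableSet_Ioc]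
    filter_upwards [hne] with x hx hxI
    exact h x ⟨le_of_lt hxI.1, lt_of_le_of_ne hxI.2 hx⟩
  have hint : IntegrableOn f (Set.Ioc p q) volume := by
    refine (MeasureTheory.Integrable.congr ?_ h0.symm)
    exact integrableOn_const measure_Ioc_lt_top.ne
  constructor
  · rw [intervalIntegrable_iff, Set.uIoc_of_le hpq]
    exact hint
  · rw [intervalIntegral.integral_of_le hpq, MeasureTheory.integral_congr_ae h0,
      setIntegral_const, Real.volume_real_Ioc_of_le hpq, smul_eq_mul]

/-- Lemma 2.4 of the paper: exact variance identity for a three-piece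
piecewise constant function on `[a, a+l]`. -/
theorem three_piece_variance_integral
    (a l l₁ l₂ l₃ gl gm gr : ℝ)
    (hl : 0 < l) (h1 : 0 ≤ l₁) (h2 : 0 ≤ l₂) (h3 : 0 ≤ l₃)
    (hsum : l₁ + l₂ + l₃ = l)
    (g : ℝ → ℝ)
    (hgl : ∀ x ∈ Set.Ico a (a + l₁), g x = gl)
    (hgm : ∀ x ∈ Set.Ico (a + l₁) (a + l₁ + l₂), g x = gm)
    (hgr : ∀ x ∈ Set.Icc (a + l₁ + l₂) (a + l), g x = gr) :
    (∫ x in a..(a + l), (g x - (1 / l) * ∫ y in a..(a + l), g y) ^ 2) =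
      l * ((l₁ / l) * (l₃ / l) * (gr - gl) ^ 2
          + (l₂ / l) * (l₃ / l) * (gr - gm) ^ 2
          + (l₁ / l) * (l₂ / l) * (gm - gl) ^ 2) := by
  have hl0 : l ≠ 0 := ne_of_gt hl
  have hb1 : a ≤ a + l₁ := by linarith
  have hb2 : a + l₁ ≤ a + l₁ + l₂ := by linarith
  have hb3 : a + l₁ + l₂ ≤ a + l := by linarith
  have hgr' : ∀ x ∈ Set.Ico (a + l₁ + l₂) (a + l), g x = gr :=
    fun x hx => hgr x ⟨hx.1, le_of_lt hx.2⟩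
  have P1 := piece_const g a (a + l₁) gl hb1 hgl
  have P2 := piece_const g (a + l₁) (a + l₁ + l₂) gm hb2 hgm
  have P3 := piece_const g (a + l₁ + l₂) (a + l) gr hb3 hgr'
  have hsplit : (∫ y in a..(a + l), g y) = l₁ * gl + l₂ * gm + l₃ * gr := by
    rw [← intervalIntegral.integral_add_adjacent_intervals
        (P1.1.trans P2.1) P3.1,
      ← intervalIntegral.integral_add_adjacent_intervals P1.1 P2.1,
      P1.2, P2.2, P3.2]
    linear_combination (-gr) * hsum
  set M : ℝ := (1 / l) * ∫ y in a..(a + l), g y with hM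
  have Q1 := piece_const (fun x => (g x - M) ^ 2) a (a + l₁) ((gl - M) ^ 2) hb1
    (fun x hx => by simp [hgl x hx])
  have Q2 := piece_const (fun x => (g x - M) ^ 2) (a + l₁) (a + l₁ + l₂)
    ((gm - M) ^ 2) hb2 (fun x hx => by simp [hgm x hx])
  have Q3 := piece_const (fun x => (g x - M) ^ 2) (a + l₁ + l₂) (a + l)
    ((gr - M) ^ 2) hb3 (fun x hx => by simp [hgr' x hx])
  have hsplit2 : (∫ x in a..(a + l), (g x - M) ^ 2)
      = l₁ * (gl - M) ^ 2 + l₂ * (gm - M) ^ 2 + l₃ * (gr - M) ^ 2 := by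
    rw [← intervalIntegral.integral_add_adjacent_intervals
        (Q1.1.trans Q2.1) Q3.1,
      ← intervalIntegral.integral_add_adjacent_intervals Q1.1 Q2.1,
      Q1.2, Q2.2, Q3.2]
    linear_combination (-(gr - M) ^ 2) * hsum
  rw [hsplit2, hM, hsplit]
  subst hsum
  field_simp
  ring
end

section
/- For any real constants w₀ and z₀, the set Θ = { (ϱ, ω) ∈ ℝ² : ϱ > 0, w(ϱ,ω) ≤ w₀, and z(ϱ,ω) ≥ z₀ } is a convex subset of ℝ². -/
/-- The invariant region `Θ = {(ϱ,ω) : ϱ > 0, w(ϱ,ω) ≤ w₀, z(ϱ,ω) ≥ z₀}`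
for the Riemann invariants `w = ω/ϱ + log ϱ`, `z = ω/ϱ − log ϱ` of the
isothermal Euler system is convex. -/
theorem invariant_region_convex (w₀ z₀ : ℝ) :
    Convex ℝ {p : ℝ × ℝ | 0 < p.1 ∧
      p.2 / p.1 + Real.log p.1 ≤ w₀ ∧
      z₀ ≤ p.2 / p.1 - Real.log p.1} := by
  rintro ⟨x, u⟩ ⟨hx, hwx, hzx⟩ ⟨y, v⟩ ⟨hy, hwy, hzy⟩ a b ha hb hab
  have hX : 0 < a * x + b * y := by
    rcases eq_or_lt_of_le ha with h | h
    · rw [← h] at hab ⊢; simpa using by nlinarith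
    · nlinarith
  have hconv := Real.convexOn_mul_log.2 (Set.mem_Ici.2 hx.le) (Set.mem_Ici.2 hy.le) ha hb hab
  simp only [smul_eq_mul] at hconv
  -- hconv : (a*x+b*y) * log (a*x+b*y) ≤ a*(x*log x) + b*(y*log y)
  refine ⟨hX, ?_, ?_⟩
  · -- from hypotheses: u ≤ x*w₀ - x*log x, v ≤ y*w₀ - y*log y
    have h1 : u ≤ x * w₀ - x * Real.log x := by
      have := (div_le_iff₀ hx).mp (by linarith [(le_sub_iff_add_le).mpr hwx] :
        u / x ≤ w₀ - Real.log x)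
      nlinarith
    have h2 : v ≤ y * w₀ - y * Real.log y := by
      have := (div_le_iff₀ hy).mp (by linarith [(le_sub_iff_add_le).mpr hwy] :
        v / y ≤ w₀ - Real.log y)
      nlinarith
    have key : a * u + b * v ≤ (a*x+b*y) * w₀ - (a*x+b*y) * Real.log (a*x+b*y) := by
      nlinarith
    have : (a * u + b * v) / (a*x+b*y) ≤ w₀ - Real.log (a*x+b*y) := by
      rw [div_le_iff₀ hX]; nlinarith
    simpa [smul_eq_mul] using (by linarith :
      (a * u + b * v) / (a*x+b*y) + Real.log (a*x+b*y) ≤ w₀)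
  · have h1 : x * z₀ + x * Real.log x ≤ u := by
      have := (le_div_iff₀ hx).mp (by linarith : z₀ + Real.log x ≤ u / x)
      nlinarith
    have h2 : y * z₀ + y * Real.log y ≤ v := by
      have := (le_div_iff₀ hy).mp (by linarith : z₀ + Real.log y ≤ v / y)
      nlinarith
    have key : (a*x+b*y) * z₀ + (a*x+b*y) * Real.log (a*x+b*y) ≤ a * u + b * v := by
      nlinarith
    have : z₀ + Real.log (a*x+b*y) ≤ (a * u + b * v) / (a*x+b*y) := by
      rw [le_div_iff₀ hX]; nlinarith
    simpa [smul_eq_mul] using (by linarith :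
      z₀ ≤ (a * u + b * v) / (a*x+b*y) - Real.log (a*x+b*y))
end

section
/- Let a < b be real numbers, let w₀, z₀ ∈ ℝ, and let (ϱ, ω) : (a,b) → ℝ² be integrable functions such that for almost every x ∈ (a,b) one has ϱ(x) > 0, w(ϱ(x),ω(x)) ≤ w₀, and z(ϱ(x),ω(x)) ≥ z₀. Then the averaged pair ( (1/(b−a)) ∫_a^b ϱ(x) dx , (1/(b−a)) ∫_a^b ω(x) dx ) satisfies ϱ̄ > 0, w(ϱ̄, ω̄) ≤ w₀, and z(ϱ̄, ω̄) ≥ z₀, where ϱ̄ and ω̄ denote the two averages. -/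
open MeasureTheory

/-- Lemma 2.2 of the paper (integral average lemma): the invariant region
`Θ = {(ϱ,ω) : ϱ > 0, w(ϱ,ω) ≤ w₀, z(ϱ,ω) ≥ z₀}` is preserved under taking
integral averages on an interval `(a,b)`. -/
theorem invariant_region_average
    (a b w₀ z₀ : ℝ) (hab : a < b) (ϱ ω : ℝ → ℝ)
    (hϱ : IntegrableOn ϱ (Set.Ioo a b))
    (hω : IntegrableOn ω (Set.Ioo a b))
    (hae : ∀ᵐ x ∂(volume.restrict (Set.Ioo a b)),
      0 < ϱ x ∧ ω x / ϱ x + Real.log (ϱ x) ≤ w₀ ∧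
        z₀ ≤ ω x / ϱ x - Real.log (ϱ x)) :
    0 < (b - a)⁻¹ * ∫ x in Set.Ioo a b, ϱ x ∧
    ((b - a)⁻¹ * ∫ x in Set.Ioo a b, ω x) / ((b - a)⁻¹ * ∫ x in Set.Ioo a b, ϱ x)
        + Real.log ((b - a)⁻¹ * ∫ x in Set.Ioo a b, ϱ x) ≤ w₀ ∧
    z₀ ≤ ((b - a)⁻¹ * ∫ x in Set.Ioo a b, ω x) / ((b - a)⁻¹ * ∫ x in Set.Ioo a b, ϱ x)
        - Real.log ((b - a)⁻¹ * ∫ x in Set.Ioo a b, ϱ x) := by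
  set μ := volume.restrict (Set.Ioo a b) with hμ
  have hℓ : (0:ℝ) < b - a := by linarith
  have hμuniv : μ Set.univ = ENNReal.ofReal (b - a) := by
    simp [hμ, Real.volume_Ioo]
  have hfin : IsFiniteMeasure μ := ⟨by rw [hμuniv]; exact ENNReal.ofReal_lt_top⟩
  have hne : NeZero μ := ⟨by
    intro h
    have := hμuniv
    rw [h] at this
    simp only [Measure.coe_zero, Pi.zero_apply] at this
    exact (ENNReal.ofReal_pos.mpr hℓ).ne' this.symm⟩
  -- pointwise inequalities in product form
  have hae' : ∀ᵐ x ∂μ, 0 < ϱ x ∧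
      ω x + ϱ x * Real.log (ϱ x) ≤ w₀ * ϱ x ∧
      z₀ * ϱ x + ϱ x * Real.log (ϱ x) ≤ ω x := by
    filter_upwards [hae] with x ⟨h1, h2, h3⟩
    refine ⟨h1, ?_, ?_⟩
    · have := mul_le_mul_of_nonneg_right h2 h1.le
      rw [add_mul, div_mul_cancel₀ _ h1.ne'] at this
      nlinarith
    · have := mul_le_mul_of_nonneg_right h3 h1.le
      rw [sub_mul, div_mul_cancel₀ _ h1.ne'] at this
      nlinarith
  set φ : ℝ → ℝ := fun t => t * Real.log t with hφ
  -- lower bound for φ on positives : φ t ≥ t - 1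
  have hφlb : ∀ t : ℝ, 0 < t → t - 1 ≤ φ t := by
    intro t ht
    have h := Real.add_one_le_exp (-Real.log t)
    rw [Real.exp_neg, Real.exp_log ht] at h
    have h' : (-Real.log t + 1) * t ≤ t⁻¹ * t := mul_le_mul_of_nonneg_right h ht.le
    rw [inv_mul_cancel₀ ht.ne'] at h'
    simp only [hφ]; nlinarith
  -- integrability of φ ∘ ϱ
  have hφm : AEStronglyMeasurable (fun x => φ (ϱ x)) μ := by
    exact (hϱ.aemeasurable.mul
      (Real.measurable_log.comp_aemeasurable hϱ.aemeasurable)).aestronglyMeasurable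
  have hgint : Integrable (fun x => 1 + |ω x - z₀ * ϱ x|) μ :=
    (integrable_const 1).add (hω.sub (hϱ.const_mul z₀)).abs
  have hφint : Integrable (fun x => φ (ϱ x)) μ := by
    refine hgint.mono' hφm ?_
    filter_upwards [hae'] with x ⟨h1, h2, h3⟩
    rw [Real.norm_eq_abs, abs_le]
    constructor
    · have := hφlb (ϱ x) h1
      have : -(1:ℝ) ≤ φ (ϱ x) := by nlinarith
      have habs : (0:ℝ) ≤ |ω x - z₀ * ϱ x| := abs_nonneg _
      linarith
    · have hub : φ (ϱ x) ≤ ω x - z₀ * ϱ x := by simp only [hφ]; linarith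
      have := le_abs_self (ω x - z₀ * ϱ x)
      linarith
  -- Jensen's inequality
  have hjen : φ (⨍ x, ϱ x ∂μ) ≤ ⨍ x, φ (ϱ x) ∂μ := by
    refine Real.convexOn_mul_log.map_average_le Real.continuous_mul_log.continuousOn
      isClosed_Ici ?_ hϱ hφint
    filter_upwards [hae'] with x ⟨h1, _, _⟩ using h1.le
  have havg : ∀ f : ℝ → ℝ, ⨍ x, f x ∂μ = (b - a)⁻¹ * ∫ x, f x ∂μ := by
    intro f
    rw [average_eq, measureReal_def, hμuniv, ENNReal.toReal_ofReal hℓ.le, smul_eq_mul]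
  -- integral inequalities
  have hint1 : ∫ x, ω x ∂μ + ∫ x, φ (ϱ x) ∂μ ≤ w₀ * ∫ x, ϱ x ∂μ := by
    rw [← integral_add hω hφint, ← integral_const_mul]
    refine integral_mono_ae (hω.add hφint) (hϱ.const_mul w₀) ?_
    filter_upwards [hae'] with x ⟨_, h2, _⟩ using h2
  have hint2 : z₀ * ∫ x, ϱ x ∂μ + ∫ x, φ (ϱ x) ∂μ ≤ ∫ x, ω x ∂μ := by
    rw [← integral_const_mul, ← integral_add (hϱ.const_mul z₀) hφint]
    refine integral_mono_ae ((hϱ.const_mul z₀).add hφint) hω ?_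
    filter_upwards [hae'] with x ⟨_, _, h3⟩ using h3
  -- positivity of the average of ϱ
  have hpos : 0 < ∫ x, ϱ x ∂μ := by
    rw [integral_pos_iff_support_of_nonneg_ae
      (by filter_upwards [hae'] with x ⟨h1, _, _⟩ using h1.le) hϱ]
    have hle : μ Set.univ ≤ μ (Function.support ϱ) := by
      refine measure_mono_ae ?_
      filter_upwards [hae'] with x ⟨h1, _, _⟩ _ using h1.ne'
    refine lt_of_lt_of_le ?_ hle
    rw [hμuniv]
    simpa using hℓ
  -- abbreviations
  set A := ∫ x, ϱ x ∂μ with hA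
  set B := ∫ x, ω x ∂μ with hB
  set C := ∫ x, φ (ϱ x) ∂μ with hC
  have hr : 0 < (b - a)⁻¹ * A := mul_pos (inv_pos.mpr hℓ) hpos
  have hjen' : ((b - a)⁻¹ * A) * Real.log ((b - a)⁻¹ * A) ≤ (b - a)⁻¹ * C := by
    have := hjen
    rw [havg ϱ, havg (fun x => φ (ϱ x))] at this
    simpa [hφ] using this
  refine ⟨hr, ?_, ?_⟩
  · rw [← sub_nonneg]
    have key : (b - a)⁻¹ * B ≤ (w₀ - Real.log ((b - a)⁻¹ * A)) * ((b - a)⁻¹ * A) := by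
      have h1 : (b - a)⁻¹ * (B + C) ≤ (b - a)⁻¹ * (w₀ * A) :=
        mul_le_mul_of_nonneg_left hint1 (inv_pos.mpr hℓ).le
      nlinarith
    have := (div_le_iff₀ hr).mpr key
    linarith
  · rw [← sub_nonneg]
    have key : (z₀ + Real.log ((b - a)⁻¹ * A)) * ((b - a)⁻¹ * A) ≤ (b - a)⁻¹ * B := by
      have h1 : (b - a)⁻¹ * (z₀ * A + C) ≤ (b - a)⁻¹ * B :=
        mul_le_mul_of_nonneg_left hint2 (inv_pos.mpr hℓ).le
      nlinarith
    have := (le_div_iff₀ hr).mpr key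
    linarith
end

section
/- Fix ξ ∈ (−1, 1). For every ϱ > 0 and ω ∈ ℝ, the pair (η_ξ, q_ξ) satisfies the entropy compatibility relation ∇q_ξ = ∇η_ξ · ∇f; explicitly, ∂_ϱ q_ξ(ϱ,ω) = (1 − ω²/ϱ²) · ∂_ω η_ξ(ϱ,ω) and ∂_ω q_ξ(ϱ,ω) = ∂_ϱ η_ξ(ϱ,ω) + (2ω/ϱ) · ∂_ω η_ξ(ϱ,ω). -/
/-- The weak entropy `η_ξ(ϱ,ω) = ϱ^{1/(1−ξ²)} exp(ξω/((1−ξ²)ϱ))`. -/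
noncomputable def etaXi (ξ ϱ ω : ℝ) : ℝ :=
  ϱ ^ ((1 : ℝ) / (1 - ξ ^ 2)) * Real.exp (ξ * ω / ((1 - ξ ^ 2) * ϱ))

/-- The weak entropy flux `q_ξ(ϱ,ω) = (ω/ϱ + ξ) η_ξ(ϱ,ω)`. -/
noncomputable def qXi (ξ ϱ ω : ℝ) : ℝ := (ω / ϱ + ξ) * etaXi ξ ϱ ω

/-- For `ξ ∈ (−1,1)`, the pair `(η_ξ, q_ξ)` satisfies the entropy
compatibility relation `∇q_ξ = ∇η_ξ · ∇f` for the isothermal Euler flux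
`f(ϱ,ω) = (ω, ω²/ϱ + ϱ)`. -/
theorem weak_entropy_pair_compatible (ξ : ℝ) (hξ : ξ ∈ Set.Ioo (-1 : ℝ) 1)
    (ϱ ω : ℝ) (hϱ : 0 < ϱ) :
    deriv (fun r => qXi ξ r ω) ϱ
      = (1 - ω ^ 2 / ϱ ^ 2) * deriv (fun w => etaXi ξ ϱ w) ω ∧
    deriv (fun w => qXi ξ ϱ w) ω
      = deriv (fun r => etaXi ξ r ω) ϱ
        + (2 * ω / ϱ) * deriv (fun w => etaXi ξ ϱ w) ω := by
  obtain ⟨hξ1, hξ2⟩ := hξ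
  have hd : (1 : ℝ) - ξ ^ 2 ≠ 0 := by nlinarith
  have hϱ' : ϱ ≠ 0 := hϱ.ne'
  -- abbreviations (not `set`, to keep things explicit)
  -- a = 1/(1-ξ^2), k = ξ*ω/(1-ξ^2), m = ξ/((1-ξ^2)*ϱ)
  -- derivative of r ↦ r^a
  have hR : HasDerivAt (fun r : ℝ => r ^ ((1:ℝ)/(1-ξ^2)))
      (((1:ℝ)/(1-ξ^2)) * ϱ ^ ((1:ℝ)/(1-ξ^2) - 1)) ϱ :=
    Real.hasDerivAt_rpow_const (Or.inl hϱ')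
  -- derivative of r ↦ exp(k * r⁻¹)
  have hE : HasDerivAt (fun r : ℝ => Real.exp (ξ*ω/(1-ξ^2) * r⁻¹))
      (Real.exp (ξ*ω/(1-ξ^2) * ϱ⁻¹) * (ξ*ω/(1-ξ^2) * -(ϱ^2)⁻¹)) ϱ :=
    ((hasDerivAt_inv hϱ').const_mul (ξ*ω/(1-ξ^2))).exp
  have hfun1 : (fun r => etaXi ξ r ω)
      = fun r : ℝ => r ^ ((1:ℝ)/(1-ξ^2)) * Real.exp (ξ*ω/(1-ξ^2) * r⁻¹) := by
    funext r
    simp only [etaXi]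
    rw [div_mul_eq_div_div, div_eq_mul_inv (ξ*ω/(1-ξ^2)) r]
  have hEtaR : HasDerivAt (fun r => etaXi ξ r ω)
      (((1:ℝ)/(1-ξ^2)) * ϱ ^ ((1:ℝ)/(1-ξ^2) - 1) * Real.exp (ξ*ω/(1-ξ^2) * ϱ⁻¹)
        + ϱ ^ ((1:ℝ)/(1-ξ^2)) * (Real.exp (ξ*ω/(1-ξ^2) * ϱ⁻¹) * (ξ*ω/(1-ξ^2) * -(ϱ^2)⁻¹))) ϱ := by
    rw [hfun1]; exact hR.mul hE
  -- derivative in ω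
  have hE2 : HasDerivAt (fun w : ℝ => Real.exp (ξ/((1-ξ^2)*ϱ) * w))
      (Real.exp (ξ/((1-ξ^2)*ϱ) * ω) * (ξ/((1-ξ^2)*ϱ) * 1)) ω :=
    ((hasDerivAt_id ω).const_mul (ξ/((1-ξ^2)*ϱ))).exp
  have hfun2 : (fun w => etaXi ξ ϱ w)
      = fun w : ℝ => ϱ ^ ((1:ℝ)/(1-ξ^2)) * Real.exp (ξ/((1-ξ^2)*ϱ) * w) := by
    funext w
    simp only [etaXi]
    rw [mul_div_right_comm]
  have hEtaW : HasDerivAt (fun w => etaXi ξ ϱ w)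
      (ϱ ^ ((1:ℝ)/(1-ξ^2)) * (Real.exp (ξ/((1-ξ^2)*ϱ) * ω) * (ξ/((1-ξ^2)*ϱ) * 1))) ω := by
    rw [hfun2]; exact hE2.const_mul _
  -- derivative of r ↦ ω/r + ξ
  have hA : HasDerivAt (fun r : ℝ => ω * r⁻¹ + ξ) (ω * -(ϱ^2)⁻¹) ϱ :=
    ((hasDerivAt_inv hϱ').const_mul ω).add_const ξ
  have hfunq1 : (fun r => qXi ξ r ω) = fun r : ℝ => (ω * r⁻¹ + ξ) * etaXi ξ r ω := by
    funext r; simp only [qXi, div_eq_mul_inv]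
  have hQR : HasDerivAt (fun r => qXi ξ r ω)
      ((ω * -(ϱ^2)⁻¹) * etaXi ξ ϱ ω + (ω * ϱ⁻¹ + ξ)
        * (((1:ℝ)/(1-ξ^2)) * ϱ ^ ((1:ℝ)/(1-ξ^2) - 1) * Real.exp (ξ*ω/(1-ξ^2) * ϱ⁻¹)
          + ϱ ^ ((1:ℝ)/(1-ξ^2)) * (Real.exp (ξ*ω/(1-ξ^2) * ϱ⁻¹) * (ξ*ω/(1-ξ^2) * -(ϱ^2)⁻¹)))) ϱ := by
    rw [hfunq1]; exact hA.mul hEtaR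
  -- derivative of w ↦ w/ϱ + ξ
  have hB : HasDerivAt (fun w : ℝ => w / ϱ + ξ) (1 / ϱ) ω :=
    ((hasDerivAt_id ω).div_const ϱ).add_const ξ
  have hfunq2 : (fun w => qXi ξ ϱ w) = fun w : ℝ => (w / ϱ + ξ) * etaXi ξ ϱ w := by
    rfl
  have hQW : HasDerivAt (fun w => qXi ξ ϱ w)
      ((1 / ϱ) * etaXi ξ ϱ ω + (ω / ϱ + ξ)
        * (ϱ ^ ((1:ℝ)/(1-ξ^2)) * (Real.exp (ξ/((1-ξ^2)*ϱ) * ω) * (ξ/((1-ξ^2)*ϱ) * 1)))) ω := by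
    rw [hfunq2]; exact hB.mul hEtaW
  rw [hQR.deriv, hQW.deriv, hEtaR.deriv, hEtaW.deriv]
  -- normalize exp arguments and the shifted rpow
  have hexp : ξ*ω/(1-ξ^2) * ϱ⁻¹ = ξ/((1-ξ^2)*ϱ) * ω := by field_simp
  have hrpow : ϱ ^ ((1:ℝ)/(1-ξ^2) - 1) = ϱ ^ ((1:ℝ)/(1-ξ^2)) / ϱ := by
    rw [Real.rpow_sub hϱ, Real.rpow_one]
  rw [hexp, hrpow]
  simp only [etaXi]
  rw [show ξ * ω / ((1 - ξ ^ 2) * ϱ) = ξ/((1-ξ^2)*ϱ) * ω from by rw [mul_div_right_comm]]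
  constructor <;> (field_simp; ring)
end

section
/- Fix ξ ∈ (−1, 1). For every ϱ > 0 and ω ∈ ℝ, the determinant of the Hessian matrix of η_ξ satisfies ∂²_ϱϱ η_ξ · ∂²_ωω η_ξ − (∂²_ϱω η_ξ)² = ( ξ⁴ / (1−ξ²)³ ) · ϱ^{ 2ξ²/(1−ξ²) − 2 } · exp( 2ξω / ((1−ξ²)ϱ) ). -/
lemma hasDerivAt_F (c b : ℝ) {r : ℝ} (hr : 0 < r) :
    HasDerivAt (fun s : ℝ => s ^ b * Real.exp (c / s))
      (b * (r ^ (b-1) * Real.exp (c / r)) - c * (r ^ (b-2) * Real.exp (c / r))) r := by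
  have h1 : HasDerivAt (fun s : ℝ => s ^ b) (b * r ^ (b-1)) r :=
    Real.hasDerivAt_rpow_const (Or.inl hr.ne')
  have h2 : HasDerivAt (fun s : ℝ => c / s) (-(c / r^2)) r := by
    simpa [div_eq_mul_inv, neg_div] using (hasDerivAt_inv hr.ne').const_mul c
  have h3 := h1.mul h2.exp
  refine h3.congr_deriv ?_
  have hb1 : r ^ (b-1) = r^b / r := by
    rw [Real.rpow_sub hr, Real.rpow_one]
  have hb2 : r ^ (b-2) = r^b / r^2 := by
    rw [Real.rpow_sub hr, Real.rpow_two]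
  rw [hb1, hb2]
  field_simp
  ring


/-- The Hessian determinant identity (eq. 4.9) used in the paper to prove
convexity of the weak entropy `η_ξ`, for `ξ ∈ (−1,1)`, `ϱ > 0`. -/
theorem weak_entropy_hessian_det (ξ : ℝ) (hξ : ξ ∈ Set.Ioo (-1 : ℝ) 1)
    (ϱ ω : ℝ) (hϱ : 0 < ϱ) :
    deriv (fun r => deriv (fun r' => etaXi ξ r' ω) r) ϱ
        * deriv (fun w => deriv (fun w' => etaXi ξ ϱ w') w) ω
      - (deriv (fun r => deriv (fun w' => etaXi ξ r w') ω) ϱ) ^ 2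
    = (ξ ^ 4 / (1 - ξ ^ 2) ^ 3) * ϱ ^ (2 * ξ ^ 2 / (1 - ξ ^ 2) - 2)
        * Real.exp (2 * ξ * ω / ((1 - ξ ^ 2) * ϱ)) := by
  obtain ⟨hξ1, hξ2⟩ := hξ
  have hk : (0:ℝ) < 1 - ξ^2 := by nlinarith
  set k : ℝ := 1 - ξ^2 with hkdef
  have hk0 : k ≠ 0 := hk.ne'
  set a : ℝ := 1/k with ha
  set c : ℝ := ξ*ω/k with hc
  -- ω-derivatives
  have hω : ∀ r : ℝ, 0 < r → ∀ w : ℝ,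
      HasDerivAt (fun w' => etaXi ξ r w') (ξ/(k*r) * etaXi ξ r w) w := by
    intro r hr w
    have h : HasDerivAt (fun w' : ℝ => ξ * w' / (k*r)) (ξ/(k*r)) w := by
      simpa using ((hasDerivAt_id w).const_mul ξ).div_const (k*r)
    have h2 := h.exp.const_mul (r ^ a)
    refine h2.congr_deriv ?_
    simp only [etaXi, ← ha, ← hkdef]
    ring
  have hωω : deriv (fun w => deriv (fun w' => etaXi ξ ϱ w') w) ω
      = ξ/(k*ϱ) * (ξ/(k*ϱ) * etaXi ξ ϱ ω) := by
    have h1 : (fun w => deriv (fun w' => etaXi ξ ϱ w') w)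
        = fun w => ξ/(k*ϱ) * etaXi ξ ϱ w := funext fun w => (hω ϱ hϱ w).deriv
    rw [h1]
    exact ((hω ϱ hϱ ω).const_mul (ξ/(k*ϱ))).deriv
  -- ϱ-derivatives : etaXi ξ r ω = r^a * exp (c/r)
  have hfun : (fun r' => etaXi ξ r' ω) = fun r' : ℝ => r' ^ a * Real.exp (c/r') := by
    funext r'
    simp only [etaXi, ← ha, ← hkdef, hc, div_div]
  have hev : (fun r => deriv (fun r' => etaXi ξ r' ω) r) =ᶠ[nhds ϱ]
      fun r => a * (r^(a-1) * Real.exp (c/r)) - c * (r^(a-2) * Real.exp (c/r)) := by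
    filter_upwards [Ioi_mem_nhds hϱ] with r hr
    rw [hfun]
    exact (hasDerivAt_F c a hr).deriv
  have hϱϱ : deriv (fun r => deriv (fun r' => etaXi ξ r' ω) r) ϱ
      = a * ((a-1) * (ϱ^(a-1-1) * Real.exp (c/ϱ)) - c * (ϱ^(a-1-2) * Real.exp (c/ϱ)))
        - c * ((a-2) * (ϱ^(a-2-1) * Real.exp (c/ϱ)) - c * (ϱ^(a-2-2) * Real.exp (c/ϱ))) := by
    rw [hev.deriv_eq]
    exact (((hasDerivAt_F c (a-1) hϱ).const_mul a).sub
      ((hasDerivAt_F c (a-2) hϱ).const_mul c)).deriv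
  -- mixed derivative
  have hmev : (fun r => deriv (fun w' => etaXi ξ r w') ω) =ᶠ[nhds ϱ]
      fun r => (ξ/k) * (r^(a-1) * Real.exp (c/r)) := by
    filter_upwards [Ioi_mem_nhds hϱ] with r hr
    rw [(hω r hr ω).deriv]
    simp only [etaXi, ← ha, ← hkdef]
    rw [Real.rpow_sub hr, Real.rpow_one]
    have : ξ * ω / (k * r) = c / r := by rw [hc, div_div]
    rw [this]
    field_simp
  have hmix : deriv (fun r => deriv (fun w' => etaXi ξ r w') ω) ϱ
      = (ξ/k) * ((a-1) * (ϱ^(a-1-1) * Real.exp (c/ϱ)) - c * (ϱ^(a-1-2) * Real.exp (c/ϱ))) := by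
    rw [hmev.deriv_eq]
    exact ((hasDerivAt_F c (a-1) hϱ).const_mul (ξ/k)).deriv
  rw [hϱϱ, hωω, hmix]
  -- normalize powers: X = ϱ^(a-4)
  have pw : ∀ s : ℝ, ∀ n : ℕ, s = (a-4) + n → ϱ ^ s = ϱ^(a-4) * ϱ^n := by
    intro s n hs
    rw [hs, Real.rpow_add hϱ, Real.rpow_natCast]
  have e0 : ϱ ^ a = ϱ^(a-4) * ϱ^(4:ℕ) := pw a 4 (by push_cast; ring)
  have e1 : ϱ ^ (a-1-1) = ϱ^(a-4) * ϱ^(2:ℕ) := pw _ 2 (by push_cast; ring)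
  have e2 : ϱ ^ (a-1-2) = ϱ^(a-4) * ϱ^(1:ℕ) := pw _ 1 (by push_cast; ring)
  have e3 : ϱ ^ (a-2-1) = ϱ^(a-4) * ϱ^(1:ℕ) := pw _ 1 (by push_cast; ring)
  have e4 : ϱ ^ (a-2-2) = ϱ^(a-4) * ϱ^(0:ℕ) := pw _ 0 (by push_cast; ring)
  have etgt : ϱ ^ (2 * ξ ^ 2 / k - 2) = ϱ^(a-4) * (ϱ^(a-4) * ϱ^(4:ℕ)) := by
    rw [← Real.rpow_natCast ϱ 4, ← Real.rpow_add hϱ, ← Real.rpow_add hϱ]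
    congr 1
    rw [ha, hkdef]
    have hk0' : (1:ℝ) - ξ ^ 2 ≠ 0 := hk0
    field_simp
    ring
  have eexp : Real.exp (2 * ξ * ω / (k * ϱ)) = Real.exp (c/ϱ) * Real.exp (c/ϱ) := by
    rw [← Real.exp_add]
    congr 1
    rw [hc, div_div]
    ring
  simp only [etaXi, ← ha, ← hkdef]
  have hcω : ξ * ω / (k * ϱ) = c / ϱ := by rw [hc, div_div]
  rw [hcω, e0, e1, e2, e3, e4, etgt, eexp, ha, hc]
  field_simp
  ring
end

section
/- Fix ξ ∈ (−1, 1). The function η_ξ(ϱ,ω) = ϱ^{1/(1−ξ²)} · exp( ξω / ((1−ξ²)ϱ) ) is a convex function on the convex set { (ϱ,ω) ∈ ℝ² : ϱ > 0 }. -/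
open Real

lemma half_pos_comb {x1 y1 a b : ℝ} (hx : 0 < x1) (hy : 0 < y1)
    (ha : 0 ≤ a) (hb : 0 ≤ b) (hab : a + b = 1) : 0 < a * x1 + b * y1 := by
  rcases eq_or_lt_of_le ha with rfl | ha'
  · have : b = 1 := by linarith
    subst this; simpa using hy
  · have h1 := mul_pos ha' hx
    have h2 := mul_nonneg hb hy.le
    linarith

/-- Perspective of `exp (ξ·)` is convex on the right half-plane. -/
lemma persp_convex (ξ : ℝ) :
    ConvexOn ℝ {p : ℝ × ℝ | 0 < p.1}
      (fun p : ℝ × ℝ => p.1 * Real.exp (ξ * p.2 / p.1)) := by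
  have hs : Convex ℝ {p : ℝ × ℝ | 0 < p.1} := by
    intro x hx y hy a b ha hb hab
    simp only [Set.mem_setOf_eq, Prod.fst_add, Prod.smul_fst, smul_eq_mul] at *
    exact half_pos_comb hx hy ha hb hab
  refine ⟨hs, ?_⟩
  intro x hx y hy a b ha hb hab
  simp only [Set.mem_setOf_eq] at hx hy
  have hS : 0 < a * x.1 + b * y.1 := half_pos_comb hx hy ha hb hab
  set S := a * x.1 + b * y.1 with hSdef
  set t := a * x.1 / S with htdef
  have ht0 : 0 ≤ t := div_nonneg (mul_nonneg ha hx.le) hS.le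
  have ht1 : t ≤ 1 := by
    rw [htdef, div_le_one hS]
    nlinarith [mul_nonneg hb hy.le]
  have h1t : 1 - t = b * y.1 / S := by
    field_simp [htdef]; rw [htdef, sub_mul, one_mul, div_mul_cancel₀ _ hS.ne', hSdef]; ring
  set u := ξ * x.2 / x.1 with hudef
  set v := ξ * y.2 / y.1 with hvdef
  have hkey : ξ * (a * x.2 + b * y.2) / S = t * u + (1 - t) * v := by
    rw [h1t, htdef, hudef, hvdef]
    field_simp
  have hexp := convexOn_exp.2 (Set.mem_univ u) (Set.mem_univ v) ht0
    (by linarith : (0:ℝ) ≤ 1 - t) (by ring)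
  simp only [smul_eq_mul] at hexp
  have hmul := mul_le_mul_of_nonneg_left hexp hS.le
  simp only [Prod.fst_add, Prod.snd_add, Prod.smul_fst, Prod.smul_snd, smul_eq_mul]
  calc S * Real.exp (ξ * (a * x.2 + b * y.2) / S)
      = S * Real.exp (t * u + (1 - t) * v) := by rw [hkey]
    _ ≤ S * (t * Real.exp u + (1 - t) * Real.exp v) := hmul
    _ = a * (x.1 * Real.exp u) + b * (y.1 * Real.exp v) := by
        rw [h1t, htdef]
        field_simp


/-- For `ξ ∈ (−1,1)`, the weak entropy `η_ξ` is convex on the convex set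
`{(ϱ,ω) : ϱ > 0}`. -/
theorem weak_entropy_convex (ξ : ℝ) (hξ : ξ ∈ Set.Ioo (-1 : ℝ) 1) :
    ConvexOn ℝ {p : ℝ × ℝ | 0 < p.1}
      (fun p : ℝ × ℝ => etaXi ξ p.1 p.2) := by
  obtain ⟨h1, h2⟩ := hξ
  have hξ2 : ξ ^ 2 < 1 := by nlinarith
  have hd : 0 < 1 - ξ ^ 2 := by linarith
  set c : ℝ := 1 / (1 - ξ ^ 2) with hcdef
  have hc1 : 1 ≤ c := by
    rw [hcdef, le_div_iff₀ hd]
    nlinarith [sq_nonneg ξ]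
  have hc0 : 0 ≤ c := by linarith
  set f : ℝ × ℝ → ℝ := fun p => p.1 * Real.exp (ξ * p.2 / p.1) with hfdef
  have hfpos : ∀ p : ℝ × ℝ, 0 < p.1 → 0 < f p := fun p hp =>
    mul_pos hp (Real.exp_pos _)
  have heq : ∀ p : ℝ × ℝ, 0 < p.1 → etaXi ξ p.1 p.2 = f p ^ c := by
    intro p hp
    rw [hfdef]
    simp only
    rw [Real.mul_rpow hp.le (Real.exp_pos _).le,
      Real.rpow_def_of_pos (Real.exp_pos _), Real.log_exp, etaXi]
    congr 1
    rw [Real.exp_eq_exp, hcdef, div_mul_div_comm, mul_one, mul_comm p.1]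
  obtain ⟨hs, hP⟩ := persp_convex ξ
  refine ⟨hs, ?_⟩
  intro x hx y hy a b ha hb hab
  have hx1 : 0 < x.1 := hx
  have hy1 : 0 < y.1 := hy
  have hz : (0:ℝ) < (a • x + b • y).1 := hs hx hy ha hb hab
  have hPe := hP hx hy ha hb hab
  simp only [smul_eq_mul] at hPe ⊢
  show etaXi ξ (a • x + b • y).1 (a • x + b • y).2
      ≤ a * etaXi ξ x.1 x.2 + b * etaXi ξ y.1 y.2
  rw [heq _ hz, heq _ hx1, heq _ hy1]
  calc f (a • x + b • y) ^ c ≤ (a * f x + b * f y) ^ c := by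
        apply Real.rpow_le_rpow (hfpos _ hz).le hPe hc0
    _ ≤ a * f x ^ c + b * f y ^ c := by
        have := (convexOn_rpow hc1).2 (Set.mem_Ici.mpr (hfpos x hx1).le)
          (Set.mem_Ici.mpr (hfpos y hy1).le) ha hb hab
        simpa [smul_eq_mul] using this
end
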